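/- arXiv:1108.3947 — 4 statements merged into one kernel-verified Lean document; each statement's English description precedes it below -/
import Mathlib

section
/- For every natural number k there exist bounded smooth functions b^α ∈ ℬ(ℝ^{2d}), indexed by the multi-indices α of order |α| ≤ 2k, such that for every smooth function f : ℝ^d × ℝ^d → ℂ one has (O^k f)(x,w) = (1+|x|²+|w|²)^{-k} Σ_{|α| ≤ 2k} b^α(x,w) (D^α f)(x,w) for all (x,w). -/
open MeasureTheory Complex Filter
open scoped Real ENNReal

noncomputable section

/-- `ℝ^d` as a measure space. -/
abbrev Rd (d : ℕ) := Fin d → ℝ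

/-- `ℝ^d × ℝ^d`, the phase space `ℝ^{2d}`. -/
abbrev Phase (d : ℕ) := Rd d × Rd d

/-- Euclidean inner product `⟨x,w⟩` on `ℝ^d`. -/
def dot {d : ℕ} (x w : Rd d) : ℝ := ∑ i, x i * w i

/-- Directional derivative along the vector `v`. -/
def pderiv1 {E F : Type*} [NormedAddCommGroup E] [NormedSpace ℝ E]
    [NormedAddCommGroup F] [NormedSpace ℝ F] (v : E) (f : E → F) : E → F :=
  fun z => fderiv ℝ f z v

/-- Laplacian in all `2d` variables `(x,w)` on `ℝ^d × ℝ^d`. -/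
def laplacian {d : ℕ} {F : Type*} [NormedAddCommGroup F] [NormedSpace ℝ F]
    (f : Phase d → F) : Phase d → F := fun z =>
  (∑ i : Fin d, pderiv1 ((Pi.single i 1 : Rd d), (0 : Rd d))
      (pderiv1 ((Pi.single i 1 : Rd d), (0 : Rd d)) f) z)
  + ∑ i : Fin d, pderiv1 ((0 : Rd d), (Pi.single i 1 : Rd d))
      (pderiv1 ((0 : Rd d), (Pi.single i 1 : Rd d)) f) z

/-- The operator `O`: `(O·f)(x,w) = (1−Δ)((1+|x|²+|w|²)⁻¹ f(x,w))`. -/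
def OpO {d : ℕ} {F : Type*} [NormedAddCommGroup F] [NormedSpace ℝ F]
    (f : Phase d → F) : Phase d → F := fun z =>
  (fun y : Phase d => (1 + dot y.1 y.1 + dot y.2 y.2)⁻¹ • f y) z
    - laplacian (fun y : Phase d => (1 + dot y.1 y.1 + dot y.2 y.2)⁻¹ • f y) z

/-- The oscillating phase `e^{i⟨x,w⟩}`. -/
def osc {d : ℕ} (z : Phase d) : ℂ := Complex.exp (Complex.I * (dot z.1 z.2 : ℝ))

/-- The standard basis vectors of `ℝ^d × ℝ^d`, indexed by `Fin d ⊕ Fin d`. -/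
def basisVec {d : ℕ} : (Fin d ⊕ Fin d) → Phase d
  | .inl i => ((Pi.single i 1 : Rd d), (0 : Rd d))
  | .inr i => ((0 : Rd d), (Pi.single i 1 : Rd d))

/-- The multi-index partial derivative `D^α` in the variables `(x,w)`. -/
def mDeriv {d : ℕ} (α : (Fin d ⊕ Fin d) → ℕ) (f : Phase d → ℂ) : Phase d → ℂ :=
  (Finset.univ : Finset (Fin d ⊕ Fin d)).toList.foldr
    (fun i g => (pderiv1 (basisVec i))^[α i] g) f

/-- `f ∈ ℬ(ℝ^N)`: smooth with all iterated derivatives (including `f`) bounded. -/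
def IsBddSmooth {E F : Type*} [NormedAddCommGroup E] [NormedSpace ℝ E]
    [NormedAddCommGroup F] [NormedSpace ℝ F] (f : E → F) : Prop :=
  ContDiff ℝ (⊤ : ℕ∞) f ∧ ∀ n : ℕ, ∃ C : ℝ, ∀ z : E, ‖iteratedFDeriv ℝ n f z‖ ≤ C

/-- The (finite) set of multi-indices `α` on the `2d` variables with `|α| ≤ N`. -/
def multiIndices (d N : ℕ) : Finset ((Fin d ⊕ Fin d) → ℕ) :=
  (Fintype.piFinset fun _ => Finset.range (N + 1)).filter (fun α => ∑ i, α i ≤ N)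


namespace Statement1
variable {d : ℕ}

/-! ### Basic objects -/

def Qr (z : Phase d) : ℝ := 1 + dot z.1 z.1 + dot z.2 z.2

lemma Qr_pos (z : Phase d) : 0 < Qr z := by
  have h1 : (0:ℝ) ≤ dot z.1 z.1 := Finset.sum_nonneg fun i _ => mul_self_nonneg _
  have h2 : (0:ℝ) ≤ dot z.2 z.2 := Finset.sum_nonneg fun i _ => mul_self_nonneg _
  unfold Qr; linarith

lemma one_le_Qr (z : Phase d) : 1 ≤ Qr z := by
  have h1 : (0:ℝ) ≤ dot z.1 z.1 := Finset.sum_nonneg fun i _ => mul_self_nonneg _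
  have h2 : (0:ℝ) ≤ dot z.2 z.2 := Finset.sum_nonneg fun i _ => mul_self_nonneg _
  unfold Qr; linarith

lemma contDiff_Qr : ContDiff ℝ (⊤ : ℕ∞) (Qr (d := d)) := by
  unfold Qr dot
  apply ContDiff.add
  apply ContDiff.add contDiff_const
  · exact ContDiff.sum fun i _ => ((contDiff_apply ℝ ℝ i).comp contDiff_fst).mul
      ((contDiff_apply ℝ ℝ i).comp contDiff_fst)
  · exact ContDiff.sum fun i _ => ((contDiff_apply ℝ ℝ i).comp contDiff_snd).mul
      ((contDiff_apply ℝ ℝ i).comp contDiff_snd)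

def Ph (z : Phase d) : ℂ := ((Qr z)⁻¹ : ℝ)

lemma contDiff_Ph : ContDiff ℝ (⊤ : ℕ∞) (Ph (d := d)) :=
  Complex.ofRealCLM.contDiff.comp (contDiff_Qr.inv fun z => (Qr_pos z).ne')

/-- The coordinate projections as continuous linear maps. -/
def PC : (Fin d ⊕ Fin d) → (Phase d →L[ℝ] ℝ)
  | .inl i => (ContinuousLinearMap.proj i).comp (ContinuousLinearMap.fst ℝ (Rd d) (Rd d))
  | .inr i => (ContinuousLinearMap.proj i).comp (ContinuousLinearMap.snd ℝ (Rd d) (Rd d))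

def cdR (v : Fin d ⊕ Fin d) (z : Phase d) : ℝ := PC v z

def cd (v : Fin d ⊕ Fin d) (z : Phase d) : ℂ := (cdR v z : ℝ)

lemma contDiff_cd (v : Fin d ⊕ Fin d) : ContDiff ℝ (⊤ : ℕ∞) (cd (d := d) v) :=
  Complex.ofRealCLM.contDiff.comp (PC v).contDiff

lemma PC_basisVec (v w : Fin d ⊕ Fin d) : PC v (basisVec w) = if v = w then 1 else 0 := by
  cases v <;> cases w <;>
    simp [PC, basisVec, Pi.single_apply, eq_comm]

/-- explicit derivative of `Qr` -/
def QL (z : Phase d) : Phase d →L[ℝ] ℝ :=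
  (0 : Phase d →L[ℝ] ℝ)
  + (∑ i : Fin d, (PC (.inl i) z • PC (.inl i) + PC (.inl i) z • PC (.inl i)))
  + ∑ i : Fin d, (PC (.inr i) z • PC (.inr i) + PC (.inr i) z • PC (.inr i))

lemma hasFDerivAt_Qr (z : Phase d) : HasFDerivAt Qr (QL z) z := by
  have h0 : HasFDerivAt (fun y : Phase d =>
      (1 : ℝ) + (∑ i : Fin d, PC (.inl i) y * PC (.inl i) y)
        + ∑ i : Fin d, PC (.inr i) y * PC (.inr i) y) (QL z) z :=
    ((hasFDerivAt_const (1:ℝ) z).add (HasFDerivAt.fun_sum fun i _ =>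
        ((PC (.inl i)).hasFDerivAt).mul ((PC (.inl i)).hasFDerivAt))).add
      (HasFDerivAt.fun_sum fun i _ => ((PC (.inr i)).hasFDerivAt).mul ((PC (.inr i)).hasFDerivAt))
  exact h0

lemma QL_basisVec (z : Phase d) (v : Fin d ⊕ Fin d) : QL z (basisVec v) = 2 * cdR v z := by
  have key : ∀ w : Fin d ⊕ Fin d, PC w (basisVec v) = if w = v then 1 else 0 :=
    fun w => PC_basisVec w v
  cases v <;> simp [QL, key, cdR, Finset.sum_ite_eq', two_mul] <;>
    rw [Finset.sum_add_distrib] <;> simp [Finset.sum_ite_eq']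

lemma hasFDerivAt_Ph (z : Phase d) :
    HasFDerivAt Ph (Complex.ofRealCLM.comp
      (((1 : ℝ →L[ℝ] ℝ).smulRight (-((Qr z) ^ 2)⁻¹)).comp (QL z))) z := by
  have hinv : HasFDerivAt (fun y : ℝ => y⁻¹)
      ((1 : ℝ →L[ℝ] ℝ).smulRight (-((Qr z) ^ 2)⁻¹)) (Qr z) := hasFDerivAt_inv (Qr_pos z).ne'
  exact Complex.ofRealCLM.hasFDerivAt.comp z (hinv.comp z (hasFDerivAt_Qr z))

lemma pderiv1_Ph (v : Fin d ⊕ Fin d) (z : Phase d) :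
    pderiv1 (basisVec v) Ph z = ((-2 : ℂ) * cd v z) * (Ph z * Ph z) := by
  unfold pderiv1
  rw [(hasFDerivAt_Ph z).fderiv]
  simp only [ContinuousLinearMap.coe_comp', Function.comp_apply,
    ContinuousLinearMap.smulRight_apply, ContinuousLinearMap.one_apply, QL_basisVec,
    smul_eq_mul]
  simp only [Complex.ofRealCLM_apply]
  unfold Ph cd
  push_cast
  ring

lemma pderiv1_cd (w v : Fin d ⊕ Fin d) (z : Phase d) :
    pderiv1 (basisVec v) (cd w) z = if w = v then 1 else 0 := by
  have h : cd (d := d) w = fun z => (Complex.ofRealCLM.comp (PC w)) z := rfl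
  unfold pderiv1
  rw [h, ContinuousLinearMap.fderiv]
  simp only [ContinuousLinearMap.coe_comp', Function.comp_apply, PC_basisVec]
  split <;> simp

/-! ### pderiv1 calculus rules -/

lemma pderiv1_fun_add {f g : Phase d → ℂ} {z : Phase d} (u : Phase d)
    (hf : DifferentiableAt ℝ f z) (hg : DifferentiableAt ℝ g z) :
    pderiv1 u (fun y => f y + g y) z = pderiv1 u f z + pderiv1 u g z := by
  unfold pderiv1; rw [fderiv_fun_add hf hg]; rfl

lemma pderiv1_fun_mul {f g : Phase d → ℂ} {z : Phase d} (u : Phase d)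
    (hf : DifferentiableAt ℝ f z) (hg : DifferentiableAt ℝ g z) :
    pderiv1 u (fun y => f y * g y) z = pderiv1 u f z * g z + f z * pderiv1 u g z := by
  unfold pderiv1
  rw [fderiv_fun_mul hf hg]
  simp only [ContinuousLinearMap.add_apply, ContinuousLinearMap.smul_apply, smul_eq_mul]
  ring

lemma pderiv1_fun_const (u : Phase d) (c : ℂ) :
    pderiv1 (E := Phase d) u (fun _ => c) = fun _ => 0 := by
  funext z; unfold pderiv1; rw [fderiv_fun_const]; simp

lemma pderiv1_fun_sum {ι : Type*} {s : Finset ι} {F : ι → Phase d → ℂ} {z : Phase d} (u : Phase d)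
    (hF : ∀ i ∈ s, DifferentiableAt ℝ (F i) z) :
    pderiv1 u (fun y => ∑ i ∈ s, F i y) z = ∑ i ∈ s, pderiv1 u (F i) z := by
  unfold pderiv1
  rw [fderiv_fun_sum hF]
  simp

lemma contDiff_pderiv1 {f : Phase d → ℂ} (u : Phase d) (hf : ContDiff ℝ (⊤ : ℕ∞) f) :
    ContDiff ℝ (⊤ : ℕ∞) (pderiv1 u f) := by
  have h : ContDiff ℝ (⊤ : ℕ∞) (fderiv ℝ f) := hf.fderiv_right (by simp)
  exact h.clm_apply contDiff_const

lemma pderiv1_comm {f : Phase d → ℂ} (hf : ContDiff ℝ (⊤ : ℕ∞) f) (u v : Phase d) (z : Phase d) :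
    pderiv1 u (pderiv1 v f) z = pderiv1 v (pderiv1 u f) z := by
  have hdf : ContDiff ℝ (⊤ : ℕ∞) (fderiv ℝ f) := hf.fderiv_right (by simp)
  have hsymm : IsSymmSndFDerivAt ℝ f z := (hf.contDiffAt).isSymmSndFDerivAt (by rw [minSmoothness_of_isRCLikeNormedField]; exact WithTop.coe_le_coe.mpr (le_top : (2 : ℕ∞) ≤ ⊤))
  have key : ∀ w u' : Phase d,
      pderiv1 u' (pderiv1 w f) z = fderiv ℝ (fderiv ℝ f) z u' w := by
    intro w u'
    unfold pderiv1
    rw [show (fun y => fderiv ℝ f y w) = fun y => (fderiv ℝ f y) ((fun _ => w) y) from rfl]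
    rw [fderiv_clm_apply (hdf.differentiable (by simp)).differentiableAt
      (differentiableAt_const w)]
    simp
  rw [key v u, key u v, hsymm u v]


/-! ### mDeriv machinery -/

def mDL (L : List (Fin d ⊕ Fin d)) (α : (Fin d ⊕ Fin d) → ℕ) (f : Phase d → ℂ) :
    Phase d → ℂ :=
  L.foldr (fun i g => (pderiv1 (basisVec i))^[α i] g) f

lemma mDeriv_eq_mDL (α : (Fin d ⊕ Fin d) → ℕ) (f : Phase d → ℂ) :
    mDeriv α f = mDL (Finset.univ : Finset (Fin d ⊕ Fin d)).toList α f := rfl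

lemma contDiff_iter {f : Phase d → ℂ} (v : Phase d) (m : ℕ) (hf : ContDiff ℝ (⊤ : ℕ∞) f) :
    ContDiff ℝ (⊤ : ℕ∞) ((pderiv1 v)^[m] f) := by
  induction m with
  | zero => simpa using hf
  | succ m ih => rw [Function.iterate_succ_apply']; exact contDiff_pderiv1 v ih

lemma contDiff_mDL {f : Phase d → ℂ} (L : List (Fin d ⊕ Fin d)) (α : (Fin d ⊕ Fin d) → ℕ)
    (hf : ContDiff ℝ (⊤ : ℕ∞) f) : ContDiff ℝ (⊤ : ℕ∞) (mDL L α f) := by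
  induction L with
  | nil => simpa [mDL] using hf
  | cons i L ih => exact contDiff_iter _ _ ih

lemma contDiff_mDeriv {f : Phase d → ℂ} (α : (Fin d ⊕ Fin d) → ℕ) (hf : ContDiff ℝ (⊤ : ℕ∞) f) :
    ContDiff ℝ (⊤ : ℕ∞) (mDeriv α f) := by
  rw [mDeriv_eq_mDL]; exact contDiff_mDL _ _ hf

/-- function-level commutation -/
lemma pderiv1_comm_fun {f : Phase d → ℂ} (hf : ContDiff ℝ (⊤ : ℕ∞) f) (u v : Phase d) :
    pderiv1 u (pderiv1 v f) = pderiv1 v (pderiv1 u f) :=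
  funext fun z => pderiv1_comm hf u v z

lemma pderiv1_iter_comm {f : Phase d → ℂ} (hf : ContDiff ℝ (⊤ : ℕ∞) f) (u v : Phase d) (m : ℕ) :
    pderiv1 u ((pderiv1 v)^[m] f) = (pderiv1 v)^[m] (pderiv1 u f) := by
  induction m generalizing f hf with
  | zero => simp
  | succ m ih =>
      rw [Function.iterate_succ_apply, Function.iterate_succ_apply,
        ih (contDiff_pderiv1 v hf), pderiv1_comm_fun hf u v]

lemma mDL_ignore {f : Phase d → ℂ} (L : List (Fin d ⊕ Fin d)) (α : (Fin d ⊕ Fin d) → ℕ)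
    (j : Fin d ⊕ Fin d) (m : ℕ) (hj : j ∉ L) :
    mDL L (Function.update α j m) f = mDL L α f := by
  induction L with
  | nil => rfl
  | cons i L ih =>
      have hij : i ≠ j := fun h => hj (h ▸ List.mem_cons_self)
      show (pderiv1 (basisVec i))^[Function.update α j m i] (mDL L (Function.update α j m) f) = _
      rw [Function.update_of_ne hij, ih (fun h => hj (List.mem_cons_of_mem i h))]
      rfl

lemma mDL_update {f : Phase d → ℂ} (hf : ContDiff ℝ (⊤ : ℕ∞) f) (L : List (Fin d ⊕ Fin d))
    (α : (Fin d ⊕ Fin d) → ℕ) (j : Fin d ⊕ Fin d) (hj : j ∈ L) (hnd : L.Nodup) :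
    mDL L (Function.update α j (α j + 1)) f = pderiv1 (basisVec j) (mDL L α f) := by
  induction L with
  | nil => exact absurd hj List.not_mem_nil
  | cons i L ih =>
      have hnd' : L.Nodup := (List.nodup_cons.mp hnd).2
      by_cases hij : i = j
      · subst hij
        have hiL : i ∉ L := (List.nodup_cons.mp hnd).1
        show (pderiv1 (basisVec i))^[Function.update α i (α i + 1) i]
            (mDL L (Function.update α i (α i + 1)) f) = _
        rw [Function.update_self, mDL_ignore L α i (α i + 1) hiL]
        rw [Function.iterate_succ_apply']
        rfl
      · have hjL : j ∈ L := by
          rcases List.mem_cons.mp hj with h | h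
          · exact absurd h.symm hij
          · exact h
        show (pderiv1 (basisVec i))^[Function.update α j (α j + 1) i]
            (mDL L (Function.update α j (α j + 1)) f) = _
        rw [Function.update_of_ne hij, ih hjL hnd']
        rw [← pderiv1_iter_comm (contDiff_mDL L α hf) (basisVec j) (basisVec i) (α i)]
        rfl

lemma mDeriv_update {f : Phase d → ℂ} (hf : ContDiff ℝ (⊤ : ℕ∞) f) (α : (Fin d ⊕ Fin d) → ℕ)
    (j : Fin d ⊕ Fin d) :
    mDeriv (Function.update α j (α j + 1)) f = pderiv1 (basisVec j) (mDeriv α f) := by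
  rw [mDeriv_eq_mDL, mDeriv_eq_mDL]
  exact mDL_update hf _ α j (by simp [Finset.mem_toList]) (Finset.nodup_toList _)

lemma mDeriv_zero (f : Phase d → ℂ) : mDeriv (fun _ => 0) f = f := by
  rw [mDeriv_eq_mDL]
  generalize (Finset.univ : Finset (Fin d ⊕ Fin d)).toList = L
  induction L with
  | nil => rfl
  | cons i L ih => simp only [mDL, List.foldr_cons, Function.iterate_zero, id] at *; exact ih

/-! ### words of partial derivatives, and the IsBddSmooth builder -/

def wordD (L : List (Fin d ⊕ Fin d)) (f : Phase d → ℂ) : Phase d → ℂ :=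
  L.foldr (fun v g => pderiv1 (basisVec v) g) f

lemma wordD_append_single (L : List (Fin d ⊕ Fin d)) (j : Fin d ⊕ Fin d) (f : Phase d → ℂ) :
    wordD (L ++ [j]) f = wordD L (pderiv1 (basisVec j) f) := by
  unfold wordD; rw [List.foldr_append]; rfl

lemma iteratedFDeriv_basis {f : Phase d → ℂ} (hf : ContDiff ℝ (⊤ : ℕ∞) f) :
    ∀ (n : ℕ) (ind : Fin n → (Fin d ⊕ Fin d)) (z : Phase d),
      iteratedFDeriv ℝ n f z (fun i => basisVec (ind i)) = wordD (List.ofFn ind) f z := by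
  intro n
  induction n generalizing f with
  | zero => intro ind z; simp [wordD]
  | succ n ih =>
      intro ind z
      have hm : (fun i : Fin (n+1) => basisVec (ind i)) =
          Fin.snoc (fun i : Fin n => basisVec (Fin.init ind i)) (basisVec (ind (Fin.last n))) := by
        have := Fin.snoc_init_self (fun i : Fin (n+1) => basisVec (ind i))
        exact this.symm
      rw [hm, iteratedFDeriv_succ_apply_right]
      rw [Fin.init_snoc, Fin.snoc_last]
      have hcomp : iteratedFDeriv ℝ n
            ((ContinuousLinearMap.apply ℝ ℂ (basisVec (ind (Fin.last n)))) ∘ (fderiv ℝ f)) z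
          = (ContinuousLinearMap.apply ℝ ℂ (basisVec (ind (Fin.last n)))).compContinuousMultilinearMap
              (iteratedFDeriv ℝ n (fderiv ℝ f) z) :=
        ContinuousLinearMap.iteratedFDeriv_comp_left _ (show ContDiff ℝ (⊤ : ℕ∞) (fderiv ℝ f) from hf.fderiv_right (by simp)).contDiffAt (by exact_mod_cast le_top)
      have hfun : pderiv1 (basisVec (ind (Fin.last n))) f =
          (ContinuousLinearMap.apply ℝ ℂ (basisVec (ind (Fin.last n)))) ∘ (fderiv ℝ f) := rfl
      have h2 := congrFun (congrArg (fun (L : ContinuousMultilinearMap ℝ (fun _ : Fin n => Phase d) ℂ)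
          => L.toFun) hcomp) (fun i : Fin n => basisVec (Fin.init ind i))
      have h3 : iteratedFDeriv ℝ n (pderiv1 (basisVec (ind (Fin.last n))) f) z
            (fun i : Fin n => basisVec (Fin.init ind i))
          = (iteratedFDeriv ℝ n (fderiv ℝ f) z (fun i : Fin n => basisVec (Fin.init ind i)))
              (basisVec (ind (Fin.last n))) := by
        rw [hfun]
        exact h2
      rw [← h3]
      rw [ih (contDiff_pderiv1 _ hf) (Fin.init ind) z]
      have : List.ofFn ind = List.ofFn (Fin.init ind) ++ [ind (Fin.last n)] := by
        rw [List.ofFn_succ' ind, List.concat_eq_append]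
        rfl
      rw [this, wordD_append_single]

lemma cdR_le_norm (w : Fin d ⊕ Fin d) (v : Phase d) : |cdR w v| ≤ ‖v‖ := by
  cases w with
  | inl i =>
      have h1 : ‖v.1 i‖ ≤ ‖v.1‖ := norm_le_pi_norm v.1 i
      have h2 : ‖v.1‖ ≤ ‖v‖ := norm_fst_le v
      simpa [cdR, PC, Real.norm_eq_abs] using h1.trans h2
  | inr i =>
      have h1 : ‖v.2 i‖ ≤ ‖v.2‖ := norm_le_pi_norm v.2 i
      have h2 : ‖v.2‖ ≤ ‖v‖ := norm_snd_le v
      simpa [cdR, PC, Real.norm_eq_abs] using h1.trans h2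

lemma sum_cdR_smul (v : Phase d) : ∑ w : Fin d ⊕ Fin d, cdR w v • basisVec w = v := by
  rw [Fintype.sum_sum_type]
  apply Prod.ext
  · simp only [Prod.fst_sum, basisVec, cdR, PC, Prod.smul_mk, Prod.fst_add, smul_zero,
      Finset.sum_const_zero, add_zero]
    simp only [ContinuousLinearMap.coe_comp', Function.comp_apply,
      ContinuousLinearMap.coe_fst', ContinuousLinearMap.proj_apply]
    have : ∀ i : Fin d, v.1 i • (Pi.single i (1:ℝ) : Rd d) = (Pi.single i (v.1 i) : Rd d) := by
      intro i; rw [← Pi.single_smul, smul_eq_mul, mul_one]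
    simp only [this]
    exact Finset.univ_sum_single v.1
  · simp only [Prod.snd_sum, basisVec, cdR, PC, Prod.smul_mk, Prod.snd_add, smul_zero,
      Finset.sum_const_zero, zero_add]
    simp only [ContinuousLinearMap.coe_comp', Function.comp_apply,
      ContinuousLinearMap.coe_snd', ContinuousLinearMap.proj_apply]
    have : ∀ i : Fin d, v.2 i • (Pi.single i (1:ℝ) : Rd d) = (Pi.single i (v.2 i) : Rd d) := by
      intro i; rw [← Pi.single_smul, smul_eq_mul, mul_one]
    simp only [this]
    exact Finset.univ_sum_single v.2

lemma isBddSmooth_of_words {f : Phase d → ℂ} (hf : ContDiff ℝ (⊤ : ℕ∞) f)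
    (hw : ∀ L : List (Fin d ⊕ Fin d), ∃ C, ∀ z, ‖wordD L f z‖ ≤ C) : IsBddSmooth f := by
  refine ⟨hf, fun n => ?_⟩
  have h1 : ∀ ind : Fin n → (Fin d ⊕ Fin d),
      ∃ C, 0 ≤ C ∧ ∀ z, ‖wordD (List.ofFn ind) f z‖ ≤ C := by
    intro ind
    obtain ⟨C, hC⟩ := hw (List.ofFn ind)
    exact ⟨max C 0, le_max_right _ _, fun z => (hC z).trans (le_max_left _ _)⟩
  choose B hB0 hB using h1
  refine ⟨∑ ind : Fin n → (Fin d ⊕ Fin d), B ind, fun z => ?_⟩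
  apply ContinuousMultilinearMap.opNorm_le_bound
    (Finset.sum_nonneg fun ind _ => hB0 ind)
  intro m
  set L := iteratedFDeriv ℝ n f z with hL
  have hexp : L m = ∑ r : Fin n → (Fin d ⊕ Fin d),
      L (fun i => cdR (r i) (m i) • basisVec (r i)) := by
    conv_lhs => rw [show m = fun i => ∑ w : Fin d ⊕ Fin d, cdR w (m i) • basisVec w from
      funext fun i => (sum_cdR_smul (m i)).symm]
    exact L.toMultilinearMap.map_sum (fun i w => cdR w (m i) • basisVec w)
  rw [hexp]
  refine (norm_sum_le _ _).trans ?_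
  rw [Finset.sum_mul]
  apply Finset.sum_le_sum
  intro r _
  have hsmul : L (fun i => cdR (r i) (m i) • basisVec (r i))
      = (∏ i, cdR (r i) (m i)) • L (fun i => basisVec (r i)) :=
    L.toMultilinearMap.map_smul_univ (fun i => cdR (r i) (m i)) (fun i => basisVec (r i))
  rw [hsmul, norm_smul]
  have hLe : ‖L (fun i => basisVec (r i))‖ ≤ B r := by
    rw [hL, iteratedFDeriv_basis hf n r z]
    exact hB r z
  have hprod : ‖∏ i, cdR (r i) (m i)‖ ≤ ∏ i : Fin n, ‖m i‖ := by
    rw [Real.norm_eq_abs, Finset.abs_prod]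
    exact Finset.prod_le_prod (fun i _ => abs_nonneg _) (fun i _ => cdR_le_norm (r i) (m i))
  calc ‖∏ i, cdR (r i) (m i)‖ * ‖L (fun i => basisVec (r i))‖
      ≤ (∏ i : Fin n, ‖m i‖) * B r := by
        apply mul_le_mul hprod hLe (norm_nonneg _)
        exact Finset.prod_nonneg fun i _ => norm_nonneg _
    _ = B r * ∏ i : Fin n, ‖m i‖ := mul_comm _ _

/-! ### IsBddSmooth closure properties -/

lemma words_bounded {f : Phase d → ℂ} (hb : IsBddSmooth f) (L : List (Fin d ⊕ Fin d)) :
    ∃ C, ∀ z, ‖wordD L f z‖ ≤ C := by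
  obtain ⟨C, hC⟩ := hb.2 L.length
  refine ⟨C, fun z => ?_⟩
  have hofn : List.ofFn (fun i : Fin L.length => L.get i) = L := List.ofFn_get L
  have := iteratedFDeriv_basis hb.1 L.length (fun i : Fin L.length => L.get i) z
  rw [hofn] at this
  rw [← this]
  have hbasis : ∀ v : Fin d ⊕ Fin d, ‖basisVec (d := d) v‖ ≤ 1 := by
    intro v
    cases v with
    | inl i =>
        rw [show basisVec (Sum.inl i) = ((Pi.single i 1 : Rd d), (0 : Rd d)) from rfl,
          Prod.norm_def]
        apply max_le _ (by simp)
        apply pi_norm_le_iff_of_nonneg zero_le_one |>.mpr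
        intro j
        rcases eq_or_ne j i with h | h <;> simp [Pi.single_apply, h]
    | inr i =>
        rw [show basisVec (Sum.inr i) = ((0 : Rd d), (Pi.single i 1 : Rd d)) from rfl,
          Prod.norm_def]
        apply max_le (by simp)
        apply pi_norm_le_iff_of_nonneg zero_le_one |>.mpr
        intro j
        rcases eq_or_ne j i with h | h <;> simp [Pi.single_apply, h]
  calc ‖iteratedFDeriv ℝ L.length f z (fun i => basisVec (L.get i))‖
      ≤ ‖iteratedFDeriv ℝ L.length f z‖ * ∏ i : Fin L.length, ‖basisVec (L.get i)‖ :=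
        (iteratedFDeriv ℝ L.length f z).le_opNorm _
    _ ≤ C * 1 := by
        apply mul_le_mul (hC z) _ (Finset.prod_nonneg fun i _ => norm_nonneg _)
          ((norm_nonneg _).trans (hC z))
        exact Finset.prod_le_one (fun i _ => norm_nonneg _) (fun i _ => hbasis _)
    _ = C := mul_one C

lemma isBddSmooth_const (c : ℂ) : IsBddSmooth (fun _ : Phase d => c) := by
  refine ⟨contDiff_const, fun n => ?_⟩
  cases n with
  | zero => exact ⟨‖c‖, fun z => by simp [norm_iteratedFDeriv_zero]⟩
  | succ n => exact ⟨0, fun z => by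
      rw [iteratedFDeriv_const_of_ne (Nat.succ_ne_zero n)]; simp⟩

lemma isBddSmooth_add {f g : Phase d → ℂ} (hf : IsBddSmooth f) (hg : IsBddSmooth g) :
    IsBddSmooth (fun z => f z + g z) := by
  refine ⟨hf.1.add hg.1, fun n => ?_⟩
  obtain ⟨C, hC⟩ := hf.2 n
  obtain ⟨C', hC'⟩ := hg.2 n
  refine ⟨C + C', fun z => ?_⟩
  have : iteratedFDeriv ℝ n (fun z => f z + g z) z
      = iteratedFDeriv ℝ n f z + iteratedFDeriv ℝ n g z := by
    exact iteratedFDeriv_add_apply (hf.1.of_le (by exact_mod_cast le_top)).contDiffAt (hg.1.of_le (by exact_mod_cast le_top)).contDiffAt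
  rw [this]
  exact (norm_add_le _ _).trans (add_le_add (hC z) (hC' z))

lemma isBddSmooth_mul {f g : Phase d → ℂ} (hf : IsBddSmooth f) (hg : IsBddSmooth g) :
    IsBddSmooth (fun z => f z * g z) := by
  refine ⟨hf.1.mul hg.1, fun n => ?_⟩
  choose Cf hCf using hf.2
  choose Cg hCg using hg.2
  set Cf' : ℕ → ℝ := fun i => max (Cf i) 0 with hCf'
  set Cg' : ℕ → ℝ := fun i => max (Cg i) 0 with hCg'
  refine ⟨∑ i ∈ Finset.range (n + 1), (n.choose i : ℝ) * Cf' i * Cg' (n - i), fun z => ?_⟩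
  refine (norm_iteratedFDeriv_mul_le hf.1 hg.1 z (by exact_mod_cast le_top)).trans ?_
  apply Finset.sum_le_sum
  intro i _
  have h1 : ‖iteratedFDeriv ℝ i f z‖ ≤ Cf' i := (hCf i z).trans (le_max_left _ _)
  have h2 : ‖iteratedFDeriv ℝ (n - i) g z‖ ≤ Cg' (n - i) := (hCg _ z).trans (le_max_left _ _)
  have hc : (0:ℝ) ≤ (n.choose i : ℝ) := Nat.cast_nonneg _
  apply mul_le_mul _ h2 (norm_nonneg _) _
  · exact mul_le_mul le_rfl h1 (norm_nonneg _) hc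
  · exact mul_nonneg hc (le_max_right _ _)

lemma isBddSmooth_pderiv_basis {f : Phase d → ℂ} (j : Fin d ⊕ Fin d) (hf : IsBddSmooth f) :
    IsBddSmooth (pderiv1 (basisVec j) f) := by
  apply isBddSmooth_of_words (contDiff_pderiv1 _ hf.1)
  intro L
  obtain ⟨C, hC⟩ := words_bounded hf (L ++ [j])
  exact ⟨C, fun z => by rw [← wordD_append_single]; exact hC z⟩

/-! ### the algebra of elementary coefficient functions -/

inductive Elt : (Phase d → ℂ) → Prop
  | const (c : ℂ) : Elt (fun _ => c)
  | phi : Elt Ph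
  | cphi (v : Fin d ⊕ Fin d) : Elt (fun z => cd v z * Ph z)
  | add {f g} : Elt f → Elt g → Elt (fun z => f z + g z)
  | mul {f g} : Elt f → Elt g → Elt (fun z => f z * g z)

lemma elt_contDiff {f : Phase d → ℂ} (h : Elt f) : ContDiff ℝ (⊤ : ℕ∞) f := by
  induction h with
  | const c => exact contDiff_const
  | phi => exact contDiff_Ph
  | cphi v => exact (contDiff_cd v).mul contDiff_Ph
  | add hf hg ihf ihg => exact ihf.add ihg
  | mul hf hg ihf ihg => exact ihf.mul ihg

lemma norm_Ph_le_one (z : Phase d) : ‖Ph z‖ ≤ 1 := by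
  unfold Ph
  rw [Complex.norm_real, Real.norm_eq_abs, abs_of_pos (inv_pos.mpr (Qr_pos z))]
  exact inv_le_one_of_one_le₀ (one_le_Qr z)

lemma abs_cdR_le_Qr (v : Fin d ⊕ Fin d) (z : Phase d) : |cdR v z| ≤ Qr z := by
  have h1 : (0:ℝ) ≤ dot z.1 z.1 := Finset.sum_nonneg fun i _ => mul_self_nonneg _
  have h2 : (0:ℝ) ≤ dot z.2 z.2 := Finset.sum_nonneg fun i _ => mul_self_nonneg _
  cases v with
  | inl i =>
      have hsq : z.1 i * z.1 i ≤ dot z.1 z.1 := by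
        unfold dot
        exact Finset.single_le_sum (fun j _ => mul_self_nonneg (z.1 j)) (Finset.mem_univ i)
      have : cdR (Sum.inl i) z = z.1 i := rfl
      rw [this]
      unfold Qr
      nlinarith [sq_nonneg (|z.1 i| - 1), _root_.sq_abs (z.1 i)]
  | inr i =>
      have hsq : z.2 i * z.2 i ≤ dot z.2 z.2 := by
        unfold dot
        exact Finset.single_le_sum (fun j _ => mul_self_nonneg (z.2 j)) (Finset.mem_univ i)
      have : cdR (Sum.inr i) z = z.2 i := rfl
      rw [this]
      unfold Qr
      nlinarith [sq_nonneg (|z.2 i| - 1), _root_.sq_abs (z.2 i)]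

lemma norm_cdPh_le_one (v : Fin d ⊕ Fin d) (z : Phase d) : ‖cd v z * Ph z‖ ≤ 1 := by
  unfold cd Ph
  rw [norm_mul, Complex.norm_real, Complex.norm_real, Real.norm_eq_abs, Real.norm_eq_abs,
    abs_of_pos (inv_pos.mpr (Qr_pos z))]
  rw [← div_eq_mul_inv, div_le_one (Qr_pos z)]
  exact abs_cdR_le_Qr v z

lemma elt_bound {f : Phase d → ℂ} (h : Elt f) : ∃ C, 0 ≤ C ∧ ∀ z, ‖f z‖ ≤ C := by
  induction h with
  | const c => exact ⟨‖c‖, norm_nonneg _, fun z => le_rfl⟩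
  | phi => exact ⟨1, zero_le_one, norm_Ph_le_one⟩
  | cphi v => exact ⟨1, zero_le_one, norm_cdPh_le_one v⟩
  | add hf hg ihf ihg =>
      obtain ⟨C, hC0, hC⟩ := ihf; obtain ⟨C', hC0', hC'⟩ := ihg
      exact ⟨C + C', by linarith, fun z =>
        (norm_add_le _ _).trans (add_le_add (hC z) (hC' z))⟩
  | mul hf hg ihf ihg =>
      obtain ⟨C, hC0, hC⟩ := ihf; obtain ⟨C', hC0', hC'⟩ := ihg
      refine ⟨C * C', mul_nonneg hC0 hC0', fun z => ?_⟩
      rw [norm_mul]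
      exact mul_le_mul (hC z) (hC' z) (norm_nonneg _) hC0

lemma elt_pderiv {f : Phase d → ℂ} (j : Fin d ⊕ Fin d) (h : Elt f) :
    Elt (pderiv1 (basisVec j) f) := by
  induction h with
  | const c =>
      rw [pderiv1_fun_const]
      exact Elt.const 0
  | phi =>
      have : pderiv1 (basisVec j) (Ph (d := d)) =
          fun z => ((-2:ℂ) * (cd j z * Ph z)) * Ph z := by
        funext z; rw [pderiv1_Ph]; ring
      rw [this]
      exact ((Elt.const (-2)).mul (Elt.cphi j)).mul Elt.phi
  | cphi v =>
      have hd1 : Differentiable ℝ (cd (d := d) v) := (contDiff_cd v).differentiable (by simp)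
      have hd2 : Differentiable ℝ (Ph (d := d)) := contDiff_Ph.differentiable (by simp)
      have : pderiv1 (basisVec j) (fun z => cd v z * Ph z) =
          fun z => (if v = j then (1:ℂ) else 0) * Ph z
            + (cd v z * Ph z) * ((-2:ℂ) * (cd j z * Ph z)) := by
        funext z
        rw [pderiv1_fun_mul _ (hd1 z) (hd2 z), pderiv1_cd, pderiv1_Ph]
        ring
      rw [this]
      exact ((Elt.const _).mul Elt.phi).add ((Elt.cphi v).mul ((Elt.const (-2)).mul (Elt.cphi j)))
  | @add f' g' hf hg ihf ihg =>
      have hd1 : Differentiable ℝ f' := (elt_contDiff hf).differentiable (by simp)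
      have hd2 : Differentiable ℝ g' := (elt_contDiff hg).differentiable (by simp)
      have : pderiv1 (basisVec j) (fun z => f' z + g' z)
          = fun z => pderiv1 (basisVec j) f' z + pderiv1 (basisVec j) g' z := by
        funext z; exact pderiv1_fun_add _ (hd1 z) (hd2 z)
      rw [this]
      exact ihf.add ihg
  | @mul f' g' hf hg ihf ihg =>
      have hd1 : Differentiable ℝ f' := (elt_contDiff hf).differentiable (by simp)
      have hd2 : Differentiable ℝ g' := (elt_contDiff hg).differentiable (by simp)
      have : pderiv1 (basisVec j) (fun z => f' z * g' z)
          = fun z => pderiv1 (basisVec j) f' z * g' z + f' z * pderiv1 (basisVec j) g' z := by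
        funext z; exact pderiv1_fun_mul _ (hd1 z) (hd2 z)
      rw [this]
      exact (ihf.mul hg).add (hf.mul ihg)

lemma elt_wordD {f : Phase d → ℂ} (L : List (Fin d ⊕ Fin d)) (h : Elt f) : Elt (wordD L f) := by
  induction L with
  | nil => exact h
  | cons i L ih => exact elt_pderiv i ih

lemma isBddSmooth_of_elt {f : Phase d → ℂ} (h : Elt f) : IsBddSmooth f := by
  apply isBddSmooth_of_words (elt_contDiff h)
  intro L
  obtain ⟨C, _, hC⟩ := elt_bound (elt_wordD L h)
  exact ⟨C, hC⟩

/-! ### multiIndices lemmas -/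

lemma mem_multiIndices {α : (Fin d ⊕ Fin d) → ℕ} {N : ℕ} :
    α ∈ multiIndices d N ↔ ∑ i, α i ≤ N := by
  unfold multiIndices
  rw [Finset.mem_filter]
  constructor
  · exact fun h => h.2
  · intro h
    refine ⟨Fintype.mem_piFinset.mpr fun i => ?_, h⟩
    rw [Finset.mem_range]
    have : α i ≤ ∑ k, α k := Finset.single_le_sum (fun k _ => Nat.zero_le _) (Finset.mem_univ i)
    omega

lemma multiIndices_mono {N M : ℕ} (h : N ≤ M) : multiIndices d N ⊆ multiIndices d M := by
  intro α hα
  rw [mem_multiIndices] at *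
  omega

/-! ### the representation predicate -/

def Rep (d N : ℕ) (T : (Phase d → ℂ) → Phase d → ℂ) : Prop :=
  ∃ b : ((Fin d ⊕ Fin d) → ℕ) → Phase d → ℂ,
    (∀ α, IsBddSmooth (b α)) ∧
    ∀ f : Phase d → ℂ, ContDiff ℝ (⊤ : ℕ∞) f → ∀ z : Phase d,
      T f z = ∑ α ∈ multiIndices d N, b α z * mDeriv α f z

lemma contDiff_rep_sum {N : ℕ} (b : ((Fin d ⊕ Fin d) → ℕ) → Phase d → ℂ)
    (hb : ∀ α, IsBddSmooth (b α)) {f : Phase d → ℂ} (hf : ContDiff ℝ (⊤ : ℕ∞) f) :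
    ContDiff ℝ (⊤ : ℕ∞) (fun z => ∑ α ∈ multiIndices d N, b α z * mDeriv α f z) :=
  ContDiff.sum fun α _ => ((hb α).1).mul (contDiff_mDeriv α hf)

lemma rep_contDiff {N : ℕ} {T : (Phase d → ℂ) → Phase d → ℂ} (hT : Rep d N T)
    {f : Phase d → ℂ} (hf : ContDiff ℝ (⊤ : ℕ∞) f) : ContDiff ℝ (⊤ : ℕ∞) (T f) := by
  obtain ⟨b, hb, hrep⟩ := hT
  have : T f = fun z => ∑ α ∈ multiIndices d N, b α z * mDeriv α f z := funext (hrep f hf)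
  rw [this]
  exact contDiff_rep_sum b hb hf

lemma rep_id : Rep d 0 (fun f => f) := by
  classical
  refine ⟨fun α => if α = (fun _ => 0) then (fun _ => 1) else (fun _ => 0), fun α => ?_, ?_⟩
  · dsimp only; split <;> exact isBddSmooth_const _
  · intro f hf z
    rw [Finset.sum_eq_single (fun _ => 0 : (Fin d ⊕ Fin d) → ℕ)]
    · simp [mDeriv_zero]
    · intro β hβ hne
      simp [if_neg hne]
    · intro h
      exact absurd (mem_multiIndices.mpr (by simp)) h

lemma rep_mono {N M : ℕ} {T : (Phase d → ℂ) → Phase d → ℂ} (h : Rep d N T) (hNM : N ≤ M) :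
    Rep d M T := by
  classical
  obtain ⟨b, hb, hrep⟩ := h
  refine ⟨fun α => if α ∈ multiIndices d N then b α else (fun _ => 0), fun α => ?_, ?_⟩
  · dsimp only
    split
    · exact hb _
    · exact isBddSmooth_const 0
  · intro f hf z
    dsimp only
    rw [hrep f hf z]
    rw [← Finset.sum_subset (multiIndices_mono hNM) (fun β _ hβ => by
      rw [if_neg hβ]; simp)]
    exact Finset.sum_congr rfl fun β hβ => by rw [if_pos hβ]

lemma rep_add {N : ℕ} {T S : (Phase d → ℂ) → Phase d → ℂ} (hT : Rep d N T) (hS : Rep d N S) :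
    Rep d N (fun f z => T f z + S f z) := by
  obtain ⟨b, hb, hrepT⟩ := hT
  obtain ⟨c, hc, hrepS⟩ := hS
  refine ⟨fun α z => b α z + c α z, fun α => isBddSmooth_add (hb α) (hc α), ?_⟩
  intro f hf z
  dsimp only
  rw [hrepT f hf z, hrepS f hf z, ← Finset.sum_add_distrib]
  exact Finset.sum_congr rfl fun β _ => by ring

lemma rep_zero {N : ℕ} : Rep d N (fun _ _ => (0 : ℂ)) := by
  refine ⟨fun _ _ => 0, fun _ => isBddSmooth_const 0, ?_⟩
  intro f hf z
  simp

lemma rep_smul {N : ℕ} {a : Phase d → ℂ} (ha : IsBddSmooth a)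
    {T : (Phase d → ℂ) → Phase d → ℂ} (hT : Rep d N T) :
    Rep d N (fun f z => a z * T f z) := by
  obtain ⟨b, hb, hrep⟩ := hT
  refine ⟨fun α z => a z * b α z, fun α => isBddSmooth_mul ha (hb α), ?_⟩
  intro f hf z
  dsimp only
  rw [hrep f hf z, Finset.mul_sum]
  exact Finset.sum_congr rfl fun β _ => by ring

lemma rep_sum {ι : Type*} {N : ℕ} (s : Finset ι) (S : ι → (Phase d → ℂ) → Phase d → ℂ)
    (h : ∀ v ∈ s, Rep d N (S v)) :
    Rep d N (fun f z => ∑ v ∈ s, S v f z) := by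
  classical
  induction s using Finset.induction with
  | empty => simpa using rep_zero
  | @insert v s hv ih =>
      have h1 := h v (Finset.mem_insert_self v s)
      have h2 := ih fun w hw => h w (Finset.mem_insert_of_mem hw)
      have := rep_add h1 h2
      refine ⟨Classical.choose this, (Classical.choose_spec this).1, ?_⟩
      intro f hf z
      dsimp only
      rw [Finset.sum_insert hv]
      exact (Classical.choose_spec this).2 f hf z

/-! ### update lemmas for multi-indices -/

lemma sum_update_succ (α : (Fin d ⊕ Fin d) → ℕ) (j : Fin d ⊕ Fin d) :
    ∑ i, Function.update α j (α j + 1) i = (∑ i, α i) + 1 := by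
  classical
  rw [Finset.sum_update_of_mem (Finset.mem_univ j)]
  rw [← Finset.add_sum_erase Finset.univ α (Finset.mem_univ j), Finset.erase_eq]
  omega

lemma update_succ_injective (j : Fin d ⊕ Fin d) :
    Function.Injective (fun α : (Fin d ⊕ Fin d) → ℕ => Function.update α j (α j + 1)) := by
  intro α β h
  funext i
  rcases eq_or_ne i j with rfl | hij
  · have := congrFun h i
    simp only [Function.update_self] at this
    omega
  · have := congrFun h i
    simpa [Function.update_of_ne hij] using this

lemma update_pred_succ {β : (Fin d ⊕ Fin d) → ℕ} {j : Fin d ⊕ Fin d} (h : β j ≠ 0) :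
    Function.update (Function.update β j (β j - 1)) j
      (Function.update β j (β j - 1) j + 1) = β := by
  rw [Function.update_self, Function.update_idem]
  have : β j - 1 + 1 = β j := by omega
  rw [this, Function.update_eq_self]

lemma update_succ_pred (α : (Fin d ⊕ Fin d) → ℕ) (j : Fin d ⊕ Fin d) :
    Function.update (Function.update α j (α j + 1)) j
      (Function.update α j (α j + 1) j - 1) = α := by
  rw [Function.update_self, Function.update_idem, Nat.add_sub_cancel,
    Function.update_eq_self]

/-! ### derivative of a representation -/

lemma rep_pderiv {N : ℕ} (j : Fin d ⊕ Fin d) {T : (Phase d → ℂ) → Phase d → ℂ}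
    (hT : Rep d N T) :
    Rep d (N + 1) (fun f => pderiv1 (basisVec j) (T f)) := by
  classical
  obtain ⟨b, hb, hrep⟩ := hT
  set ι : ((Fin d ⊕ Fin d) → ℕ) → ((Fin d ⊕ Fin d) → ℕ) :=
    fun α => Function.update α j (α j + 1) with hι
  set P : ((Fin d ⊕ Fin d) → ℕ) → Prop :=
    fun β => β j ≠ 0 ∧ Function.update β j (β j - 1) ∈ multiIndices d N with hP
  have hPdec : DecidablePred P := fun β => instDecidableAnd
  refine ⟨fun β z =>
    (if β ∈ multiIndices d N then pderiv1 (basisVec j) (b β) z else 0)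
      + (if P β then b (Function.update β j (β j - 1)) z else 0), fun β => ?_, ?_⟩
  · apply isBddSmooth_add
    · split
      · exact isBddSmooth_pderiv_basis j (hb β)
      · exact isBddSmooth_const 0
    · split
      · exact hb _
      · exact isBddSmooth_const 0
  · intro f hf z
    dsimp only
    have hTf : T f = fun z => ∑ α ∈ multiIndices d N, b α z * mDeriv α f z :=
      funext (hrep f hf)
    rw [hTf]
    have hdiff : ∀ α ∈ multiIndices d N,
        DifferentiableAt ℝ (fun z => b α z * mDeriv α f z) z :=
      fun α _ => (((hb α).1.differentiable (by simp)) z).mul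
        (((contDiff_mDeriv α hf).differentiable (by simp)) z)
    rw [pderiv1_fun_sum (basisVec j) hdiff]
    have hterm : ∀ α ∈ multiIndices d N,
        pderiv1 (basisVec j) (fun z => b α z * mDeriv α f z) z
          = pderiv1 (basisVec j) (b α) z * mDeriv α f z
            + b α z * mDeriv (ι α) f z := by
      intro α _
      rw [pderiv1_fun_mul (basisVec j) (((hb α).1.differentiable (by simp)) z)
        (((contDiff_mDeriv α hf).differentiable (by simp)) z)]
      rw [hι]
      rw [mDeriv_update hf α j]
    rw [Finset.sum_congr rfl hterm, Finset.sum_add_distrib]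
    -- now handle RHS
    have hRHS : ∑ β ∈ multiIndices d (N+1),
        ((if β ∈ multiIndices d N then pderiv1 (basisVec j) (b β) z else 0)
          + (if P β then b (Function.update β j (β j - 1)) z else 0)) * mDeriv β f z
        = (∑ β ∈ multiIndices d (N+1),
            (if β ∈ multiIndices d N then pderiv1 (basisVec j) (b β) z else 0) * mDeriv β f z)
          + ∑ β ∈ multiIndices d (N+1),
            (if P β then b (Function.update β j (β j - 1)) z else 0) * mDeriv β f z := by
      rw [← Finset.sum_add_distrib]
      exact Finset.sum_congr rfl fun β _ => by ring
    rw [hRHS]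
    congr 1
    · -- first piece
      rw [← Finset.sum_subset (multiIndices_mono (Nat.le_succ N))
        (fun β _ hβ => by rw [if_neg hβ, zero_mul])]
      exact (Finset.sum_congr rfl fun β hβ => by rw [if_pos hβ]).symm
    · -- second piece
      have himg : (multiIndices d N).image ι ⊆ multiIndices d (N+1) := by
        intro β hβ
        obtain ⟨α, hα, rfl⟩ := Finset.mem_image.mp hβ
        rw [mem_multiIndices]
        rw [hι, sum_update_succ]
        have := mem_multiIndices.mp hα
        omega
      have hvanish : ∀ β ∈ multiIndices d (N+1), β ∉ (multiIndices d N).image ι →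
          (if P β then b (Function.update β j (β j - 1)) z else 0) * mDeriv β f z = 0 := by
        intro β _ hβni
        rcases hPdec β with hnP | hP'
        · rw [if_neg hnP, zero_mul]
        · exfalso
          apply hβni
          apply Finset.mem_image.mpr
          exact ⟨Function.update β j (β j - 1), hP'.2, by
            rw [hι]
            exact update_pred_succ hP'.1⟩
      rw [← Finset.sum_subset himg hvanish]
      have hinj : ∀ x ∈ multiIndices d N, ∀ y ∈ multiIndices d N, ι x = ι y → x = y :=
        fun x _ y _ h => update_succ_injective j h
      rw [Finset.sum_image hinj]
      apply Finset.sum_congr rfl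
      intro α hα
      have hPι : P (ι α) := by
        constructor
        · rw [hι]; simp [Function.update_self]
        · rw [hι, update_succ_pred]
          exact hα
      rw [if_pos hPι]
      congr 1
      rw [hι, update_succ_pred]

/-! ### core computation for OpO -/

def ps (m : ℕ) (v : Fin d ⊕ Fin d) : Phase d → ℂ :=
  fun z => (-2 * (m : ℂ)) * (cd v z * Ph z)

lemma elt_ps (m : ℕ) (v : Fin d ⊕ Fin d) : Elt (ps (d := d) m v) :=
  (Elt.const _).mul (Elt.cphi v)

lemma contDiff_ps (m : ℕ) (v : Fin d ⊕ Fin d) : ContDiff ℝ (⊤ : ℕ∞) (ps (d := d) m v) :=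
  elt_contDiff (elt_ps m v)

lemma pderiv1_PhPow_mul {G : Phase d → ℂ} (hG : ContDiff ℝ (⊤ : ℕ∞) G) (m : ℕ) (v : Fin d ⊕ Fin d) :
    pderiv1 (basisVec v) (fun y => Ph y ^ m * G y)
      = fun z => Ph z ^ m * (ps m v z * G z + pderiv1 (basisVec v) G z) := by
  induction m generalizing G with
  | zero =>
      have h0 : (fun y : Phase d => Ph y ^ 0 * G y) = G := funext fun y => by simp
      rw [h0]
      funext z
      simp [ps]
  | succ m ih =>
      have hfun : (fun y : Phase d => Ph y ^ (m+1) * G y)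
          = fun y => Ph y * (Ph y ^ m * G y) := funext fun y => by ring
      rw [hfun]
      funext z
      have hd1 : DifferentiableAt ℝ (Ph (d := d)) z :=
        (contDiff_Ph.differentiable (by simp)) z
      have hd2 : DifferentiableAt ℝ (fun y => Ph y ^ m * G y) z :=
        (((contDiff_Ph.pow m).mul hG).differentiable (by simp)) z
      rw [pderiv1_fun_mul (basisVec v) hd1 hd2, pderiv1_Ph, congrFun (ih hG) z]
      simp only [ps]
      push_cast
      ring

lemma pderiv2_PhPow_mul {G : Phase d → ℂ} (hG : ContDiff ℝ (⊤ : ℕ∞) G) (m : ℕ) (v : Fin d ⊕ Fin d)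
    (z : Phase d) :
    pderiv1 (basisVec v) (pderiv1 (basisVec v) (fun y => Ph y ^ m * G y)) z
      = Ph z ^ m * (ps m v z * (ps m v z * G z + pderiv1 (basisVec v) G z)
          + (pderiv1 (basisVec v) (ps m v) z * G z
            + ps m v z * pderiv1 (basisVec v) G z
            + pderiv1 (basisVec v) (pderiv1 (basisVec v) G) z)) := by
  rw [pderiv1_PhPow_mul hG m v]
  have hH : ContDiff ℝ (⊤ : ℕ∞) (fun z => ps (d := d) m v z * G z + pderiv1 (basisVec v) G z) :=
    ((contDiff_ps m v).mul hG).add (contDiff_pderiv1 _ hG)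
  rw [congrFun (pderiv1_PhPow_mul hH m v) z]
  congr 2
  have hd1 : DifferentiableAt ℝ (fun z => ps (d := d) m v z * G z) z :=
    (((contDiff_ps m v).mul hG).differentiable (by simp)) z
  have hd2 : DifferentiableAt ℝ (pderiv1 (basisVec v) G) z :=
    ((contDiff_pderiv1 _ hG).differentiable (by simp)) z
  rw [pderiv1_fun_add (basisVec v) hd1 hd2]
  rw [pderiv1_fun_mul (basisVec v) (((contDiff_ps m v).differentiable (by simp)) z)
    ((hG.differentiable (by simp)) z)]

lemma laplacian_eq_sum (f : Phase d → ℂ) (z : Phase d) :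
    laplacian f z = ∑ v : Fin d ⊕ Fin d,
      pderiv1 (basisVec v) (pderiv1 (basisVec v) f) z := by
  rw [Fintype.sum_sum_type]
  rfl

lemma opO_phiPow (k : ℕ) {G : Phase d → ℂ} (hG : ContDiff ℝ (⊤ : ℕ∞) G) (z : Phase d) :
    OpO (fun y => Ph y ^ k * G y) z = Ph z ^ (k+1) *
      (G z - ∑ v : Fin d ⊕ Fin d,
        (ps (k+1) v z * (ps (k+1) v z * G z + pderiv1 (basisVec v) G z)
          + (pderiv1 (basisVec v) (ps (k+1) v) z * G z
            + ps (k+1) v z * pderiv1 (basisVec v) G z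
            + pderiv1 (basisVec v) (pderiv1 (basisVec v) G) z))) := by
  have hsm : (fun y : Phase d =>
      (1 + dot y.1 y.1 + dot y.2 y.2)⁻¹ • ((fun y => Ph y ^ k * G y) y))
      = fun y => Ph y ^ (k+1) * G y := by
    funext y
    have h1 : ((1 + dot y.1 y.1 + dot y.2 y.2)⁻¹ : ℝ) • (Ph y ^ k * G y)
        = Ph y * (Ph y ^ k * G y) := by
      rw [Complex.real_smul]
      rfl
    simpa [pow_succ] using h1.trans (by ring)
  show (fun y : Phase d => (1 + dot y.1 y.1 + dot y.2 y.2)⁻¹ • ((fun y => Ph y ^ k * G y) y)) z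
      - laplacian (fun y : Phase d =>
          (1 + dot y.1 y.1 + dot y.2 y.2)⁻¹ • ((fun y => Ph y ^ k * G y) y)) z = _
  rw [hsm, laplacian_eq_sum]
  have hterm : ∀ v : Fin d ⊕ Fin d,
      pderiv1 (basisVec v) (pderiv1 (basisVec v) (fun y => Ph y ^ (k+1) * G y)) z
        = Ph z ^ (k+1) * (ps (k+1) v z * (ps (k+1) v z * G z + pderiv1 (basisVec v) G z)
            + (pderiv1 (basisVec v) (ps (k+1) v) z * G z
              + ps (k+1) v z * pderiv1 (basisVec v) G z
              + pderiv1 (basisVec v) (pderiv1 (basisVec v) G) z)) :=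
    fun v => pderiv2_PhPow_mul hG (k+1) v z
  rw [Finset.sum_congr rfl (fun v _ => hterm v), ← Finset.mul_sum, mul_sub]

/-! ### main induction -/

lemma main_rep (k : ℕ) : ∃ T : (Phase d → ℂ) → Phase d → ℂ,
    Rep d (2*k) T ∧ ∀ f, ContDiff ℝ (⊤ : ℕ∞) f → ∀ z, (OpO^[k] f) z = Ph z ^ k * T f z := by
  induction k with
  | zero =>
      refine ⟨fun f => f, rep_mono rep_id (by omega), ?_⟩
      intro f hf z
      simp
  | succ k ih =>
      obtain ⟨T, hT, hE⟩ := ih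
      set m := k + 1 with hm
      refine ⟨fun f z => T f z + (-1 : ℂ) * ∑ v : Fin d ⊕ Fin d,
        (ps m v z * (ps m v z * T f z + pderiv1 (basisVec v) (T f) z)
          + (pderiv1 (basisVec v) (ps m v) z * T f z
            + ps m v z * pderiv1 (basisVec v) (T f) z
            + pderiv1 (basisVec v) (pderiv1 (basisVec v) (T f)) z)), ?_, ?_⟩
      · -- the Rep property
        apply rep_add (rep_mono hT (by omega))
        apply rep_smul (isBddSmooth_const (-1))
        apply rep_sum Finset.univ
        intro v _
        have hps : IsBddSmooth (ps (d := d) m v) := isBddSmooth_of_elt (elt_ps m v)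
        have hdps : IsBddSmooth (pderiv1 (basisVec v) (ps (d := d) m v)) :=
          isBddSmooth_of_elt (elt_pderiv v (elt_ps m v))
        apply rep_add
        · -- ps * (ps * T + pderiv T)
          apply rep_smul hps
          apply rep_add (rep_mono (rep_smul hps hT) (by omega))
          exact rep_mono (rep_pderiv v hT) (by omega)
        · apply rep_add
          · apply rep_add (rep_mono (rep_smul hdps hT) (by omega))
            exact rep_mono (rep_smul hps (rep_pderiv v hT)) (by omega)
          · exact rep_mono (rep_pderiv v (rep_pderiv v hT)) (by omega)
      · intro f hf z
        rw [Function.iterate_succ_apply']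
        have hOk : OpO^[k] f = fun z => Ph z ^ k * T f z := funext (hE f hf)
        rw [hOk]
        have hGsm : ContDiff ℝ (⊤ : ℕ∞) (T f) := rep_contDiff hT hf
        rw [opO_phiPow k hGsm z]
        ring

end Statement1
/-- For every `k` there exist functions `b^α ∈ ℬ(ℝ^{2d})`, indexed by
multi-indices `|α| ≤ 2k`, such that for every smooth `f : ℝ^d × ℝ^d → ℂ`,
`(O^k f)(x,w) = (1+|x|²+|w|²)^{-k} ∑_{|α| ≤ 2k} b^α(x,w) (D^α f)(x,w)`. -/
theorem opO_iterate_eq_weighted_sum_of_derivatives (d k : ℕ) :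
    ∃ b : ((Fin d ⊕ Fin d) → ℕ) → Phase d → ℂ,
      (∀ α : (Fin d ⊕ Fin d) → ℕ, (∑ i, α i) ≤ 2 * k → IsBddSmooth (b α)) ∧
      ∀ f : Phase d → ℂ, ContDiff ℝ (⊤ : ℕ∞) f → ∀ z : Phase d,
        (OpO^[k] f) z =
          (((((1 : ℝ) + dot z.1 z.1 + dot z.2 z.2) ^ k)⁻¹ : ℝ) : ℂ) *
            ∑ α ∈ multiIndices d (2 * k), b α z * mDeriv α f z := by
  classical
  obtain ⟨T, ⟨b, hb, hrep⟩, hE⟩ := Statement1.main_rep (d := d) k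
  refine ⟨b, fun α _ => hb α, ?_⟩
  intro f hf z
  rw [hE f hf z, hrep f hf z]
  congr 1
  have h1 : ((((1 : ℝ) + dot z.1 z.1 + dot z.2 z.2) ^ k)⁻¹ : ℝ)
      = (((1 : ℝ) + dot z.1 z.1 + dot z.2 z.2)⁻¹) ^ k := (inv_pow _ _).symm
  rw [h1]
  rw [Complex.ofReal_pow]
  rfl
end
end

section
/- Let H be the Hilbert space of families F = (F_I), indexed by the subsets I of {1,…,n}, with each F_I ∈ L²(ℝ^m, ℂ), equipped with the inner product (F,G) = Σ_I ∫_{ℝ^m} conj(F_I(x)) G_I(x) dx. Define the Hodge operator ∗ on H by (∗F)_J = ε(∁J, J) F_{∁J} for every subset J, where ∁J is the complement of J. Then: (a) ∗ is a unitary operator on H, i.e. (∗F, ∗G) = (F,G) for all F,G; (b) ∗ is homogeneous of degree n mod 2 for the ℤ₂-grading of H by the parity of |I| (if F_I = 0 unless |I| ≡ p mod 2, then (∗F)_J = 0 unless |J| ≡ n−p mod 2); (c) for every F homogeneous of parity p, ∗(∗F) = (−1)^{(n+1)p} F. Consequently (H, ∗) satisfies all the axioms of a Hilbert superspace of parity n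 mod 2 (this H is L²(ℝ^{m|n}) in components). -/
/-!
Up to the signs `ε(∁J, J) = ±1`, the Hodge operator permutes the components by `J ↦ ∁J`, so it
preserves `Σ_I ∫ conj(F_I) G_I`, and it maps the parity `p` to `n - p`. Applying it twice
multiplies `F_J` by `ε(∁J, J) ε(J, ∁J) = (-1)^{|∁J| |J|}`, and `|∁J| |J| ≡ (n + 1) |J|` since
`|J| (|J| + 1)` is even.
-/

open MeasureTheory Complex
open scoped Real ENNReal

noncomputable section

/-- `ε(I,J) = (−1)^{#{(i,j) ∈ I×J : i > j}}`, the signature of the shuffle permutation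
ordering the concatenation of `I` and `J`. -/
def shuffleSign {n : ℕ} (I J : Finset (Fin n)) : ℤ :=
  (-1) ^ ((I ×ˢ J).filter fun p => p.2 < p.1).card

/-- The Hodge operator on component families: `(∗F)_J = ε(∁J, J) F_{∁J}`. -/
def hodgeOp {m n : ℕ} (F : Finset (Fin n) → (Fin m → ℝ) → ℂ) :
    Finset (Fin n) → (Fin m → ℝ) → ℂ := fun J x =>
  ((shuffleSign Jᶜ J : ℤ) : ℂ) * F Jᶜ x

/-- `F` is homogeneous of parity `p`: `F_I = 0` unless `|I| ≡ p (mod 2)`. -/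
def IsHomogeneous {m n : ℕ} (F : Finset (Fin n) → (Fin m → ℝ) → ℂ) (p : ℕ) : Prop :=
  ∀ I : Finset (Fin n), ((I.card : ℤ) % 2 ≠ (p : ℤ) % 2) → F I = 0

open Finset

namespace Finset

variable {α : Type*} [LinearOrder α]

theorem card_filter_snd_lt_fst_product_swap (I J : Finset α) :
    #((J ×ˢ I).filter fun p => p.2 < p.1) = #((I ×ˢ J).filter fun p => p.1 < p.2) :=
  card_nbij' Prod.swap Prod.swap (by intro p; simp [and_comm]) (by intro p; simp [and_comm])
    (fun _ _ => rfl) (fun _ _ => rfl)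

/-- Each pair of the disjoint sets `I`, `J` is an inversion of exactly one of the two shuffles. -/
theorem card_inversions_add_card_inversions_swap {I J : Finset α} (h : Disjoint I J) :
    #((I ×ˢ J).filter fun p => p.2 < p.1) + #((J ×ˢ I).filter fun p => p.2 < p.1) =
      #I * #J := by
  rw [card_filter_snd_lt_fst_product_swap I J, ← card_product]
  convert card_filter_add_card_filter_not (s := I ×ˢ J) (fun p => p.2 < p.1) using 3
  ext p
  simp only [mem_filter, mem_product, not_lt, and_congr_right_iff]
  intro hp
  exact ⟨le_of_lt, fun hle => lt_of_le_of_ne hle fun heq => disjoint_left.mp h (heq ▸ hp.1) hp.2⟩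

end Finset

theorem shuffleSign_mul_shuffleSign_swap {n : ℕ} {I J : Finset (Fin n)} (h : Disjoint I J) :
    shuffleSign I J * shuffleSign J I = (-1) ^ (#I * #J) := by
  rw [shuffleSign, shuffleSign, ← pow_add, card_inversions_add_card_inversions_swap h]

theorem shuffleSign_mul_self {n : ℕ} (I J : Finset (Fin n)) :
    shuffleSign I J * shuffleSign I J = 1 := by
  rw [shuffleSign, ← mul_pow]
  simp

theorem neg_one_pow_mul_eq_neg_one_pow_succ_add_mul {R : Type*} [Monoid R] [HasDistribNeg R]
    (a b : ℕ) : (-1 : R) ^ (a * b) = (-1) ^ ((a + b + 1) * b) := by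
  rw [show (a + b + 1) * b = a * b + b * (b + 1) by ring, pow_add,
    (Nat.even_mul_succ_self b).neg_one_pow, mul_one]

section Hodge

variable {m n : ℕ}

theorem conj_hodgeOp_mul_hodgeOp (F G : Finset (Fin n) → (Fin m → ℝ) → ℂ)
    (J : Finset (Fin n)) (x : Fin m → ℝ) :
    starRingEnd ℂ (hodgeOp F J x) * hodgeOp G J x = starRingEnd ℂ (F Jᶜ x) * G Jᶜ x := by
  have hsign := congrArg (fun k : ℤ => (k : ℂ)) (shuffleSign_mul_self Jᶜ J)
  simp only [Int.cast_mul, Int.cast_one] at hsign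
  simp only [hodgeOp, map_mul, map_intCast]
  linear_combination (starRingEnd ℂ (F Jᶜ x) * G Jᶜ x) * hsign

theorem sum_integral_conj_hodgeOp_mul_hodgeOp (F G : Finset (Fin n) → (Fin m → ℝ) → ℂ) :
    ∑ J, ∫ x, starRingEnd ℂ (hodgeOp F J x) * hodgeOp G J x =
      ∑ I, ∫ x, starRingEnd ℂ (F I x) * G I x := by
  simp only [conj_hodgeOp_mul_hodgeOp]
  exact Fintype.sum_bijective _ compl_involutive.bijective _ _ fun _ => rfl

theorem hodgeOp_eq_zero_of_isHomogeneous {F : Finset (Fin n) → (Fin m → ℝ) → ℂ} {p : ℕ}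
    (hF : IsHomogeneous F p) {J : Finset (Fin n)}
    (hJ : (#J : ℤ) % 2 ≠ ((n : ℤ) - p) % 2) : hodgeOp F J = 0 := by
  have hcard : #Jᶜ + #J = n := by simp [card_compl_add_card J]
  have hFJ : F Jᶜ = 0 := hF _ (by omega)
  funext x
  simp [hodgeOp, hFJ]

theorem hodgeOp_hodgeOp_apply (F : Finset (Fin n) → (Fin m → ℝ) → ℂ) (J : Finset (Fin n))
    (x : Fin m → ℝ) : hodgeOp (hodgeOp F) J x = (-1) ^ ((n + 1) * #J) * F J x := by
  have hsign := congrArg (fun k : ℤ => (k : ℂ))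
    (shuffleSign_mul_shuffleSign_swap (disjoint_compl_left (a := J)))
  simp only [Int.cast_mul, Int.cast_pow, Int.cast_neg, Int.cast_one] at hsign
  have hcard : #Jᶜ + #J = n := by simp [card_compl_add_card J]
  simp only [hodgeOp, compl_compl, ← mul_assoc, hsign]
  rw [neg_one_pow_mul_eq_neg_one_pow_succ_add_mul, hcard]

theorem hodgeOp_hodgeOp_of_isHomogeneous {F : Finset (Fin n) → (Fin m → ℝ) → ℂ} {p : ℕ}
    (hF : IsHomogeneous F p) (J : Finset (Fin n)) (x : Fin m → ℝ) :
    hodgeOp (hodgeOp F) J x = (-1) ^ ((n + 1) * p) * F J x := by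
  rw [hodgeOp_hodgeOp_apply]
  by_cases hJ : (#J : ℤ) % 2 = (p : ℤ) % 2
  · have hJp : #J % 2 = p % 2 := by omega
    rw [mul_comm _ #J, mul_comm _ p, pow_mul, pow_mul, neg_one_pow_eq_pow_mod_two (n := #J),
      neg_one_pow_eq_pow_mod_two (n := p), hJp]
  · simp [hF J hJ]

end Hodge

theorem hodge_hilbert_superspace_general (m n : ℕ)
    (F G : Finset (Fin n) → (Fin m → ℝ) → ℂ) :
    (∑ J : Finset (Fin n), ∫ x : Fin m → ℝ,
        (starRingEnd ℂ) (hodgeOp F J x) * hodgeOp G J x =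
      ∑ I : Finset (Fin n), ∫ x : Fin m → ℝ, (starRingEnd ℂ) (F I x) * G I x) ∧
    (∀ p : ℕ, IsHomogeneous F p →
      ∀ J : Finset (Fin n), ((J.card : ℤ) % 2 ≠ ((n : ℤ) - (p : ℤ)) % 2) →
        hodgeOp F J = 0) ∧
    (∀ p : ℕ, IsHomogeneous F p →
      ∀ (J : Finset (Fin n)) (x : Fin m → ℝ),
        hodgeOp (hodgeOp F) J x = ((-1 : ℂ)) ^ ((n + 1) * p) * F J x) :=
  ⟨sum_integral_conj_hodgeOp_mul_hodgeOp F G,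
    fun _ hF _ hJ => hodgeOp_eq_zero_of_isHomogeneous hF hJ,
    fun _ hF => hodgeOp_hodgeOp_of_isHomogeneous hF⟩

/-- On the Hilbert space `H = L²(ℝ^{m|n})` of families `F = (F_I)_I`,
`F_I ∈ L²(ℝ^m)`, with inner product `(F,G) = Σ_I ∫ conj(F_I) G_I`, the Hodge operator
`(∗F)_J = ε(∁J,J) F_{∁J}` is (a) unitary, (b) homogeneous of degree `n mod 2` for the
`ℤ₂`-grading by parity of `|I|`, and (c) satisfies `∗∗F = (−1)^{(n+1)p} F` on elements of
parity `p`; hence `(H,∗)` is a Hilbert superspace of parity `n mod 2`. -/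
theorem hodge_hilbert_superspace (m n : ℕ)
    (F G : Finset (Fin n) → (Fin m → ℝ) → ℂ)
    (hF : ∀ I, MemLp (F I) 2 (volume : Measure (Fin m → ℝ)))
    (hG : ∀ I, MemLp (G I) 2 (volume : Measure (Fin m → ℝ))) :
    (∑ J : Finset (Fin n), ∫ x : Fin m → ℝ,
        (starRingEnd ℂ) (hodgeOp F J x) * hodgeOp G J x =
      ∑ I : Finset (Fin n), ∫ x : Fin m → ℝ, (starRingEnd ℂ) (F I x) * G I x) ∧
    (∀ p : ℕ, IsHomogeneous F p →
      ∀ J : Finset (Fin n), ((J.card : ℤ) % 2 ≠ ((n : ℤ) - (p : ℤ)) % 2) →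
        hodgeOp F J = 0) ∧
    (∀ p : ℕ, IsHomogeneous F p →
      ∀ (J : Finset (Fin n)) (x : Fin m → ℝ),
        hodgeOp (hodgeOp F) J x = ((-1 : ℂ)) ^ ((n + 1) * p) * F J x) :=
  hodge_hilbert_superspace_general m n F G
end
end

section
/- Let H = H₀ ⊕ H₁ be a complex Hilbert space written as the orthogonal direct sum of two closed subspaces, let n ∈ {0,1}, and let J be a unitary operator on H with J(H_i) ⊆ H_{i+n mod 2} and J²x = (−1)^{(n+1)i} x for all x ∈ H_i (i ∈ {0,1}). Define ⟨x,y⟩ := (Jx, y) for x,y ∈ H, where (·,·) is the Hilbert inner product. Let T be a bounded operator homogeneous of degree t ∈ {0,1} (i.e. T(H_i) ⊆ H_{i+t mod 2}), and define its superadjoint T† as the bounded operator acting on x ∈ H_i by T†x = (−1)^{(n+1)(t+i)+ti} J T* J x (extended additively to H), where T* is the Hilbert-space adjoint of T. Then for every homogeneous x ∈ H_i and every y ∈ H: ⟨T†x, y⟩ = (−1)^{t·i} ⟨x, Ty⟩. -/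
open ContinuousLinearMap

/-! The superadjoint is built so that every sign cancels: pulling the scalar out of `⟨J(c • J T* J x), y⟩`
conjugates it (it is real), `J²` acts on `T* J x ∈ H_{i+n+t}` by `(−1)^{(n+1)(i+n+t)}`, which equals
`(−1)^{(n+1)(i+t)}` since `n(n+1)` is even, and what remains is `(T* J x, y) = (J x, T y)`. The only
input about `T*` is that it is homogeneous of the same degree as `T`, which follows because each
`H_j` is the orthogonal complement of `H_{j+1}`. -/

section Graded

variable {𝕜 E : Type*} [RCLike 𝕜] [NormedAddCommGroup E] [InnerProductSpace 𝕜 E]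
  {V : Fin 2 → Submodule 𝕜 E}

theorem inner_eq_zero_of_mem_of_mem_add_one
    (horth : ∀ x ∈ V 0, ∀ y ∈ V 1, (inner 𝕜 x y : 𝕜) = 0)
    {j : Fin 2} {u v : E} (hu : u ∈ V j) (hv : v ∈ V (j + 1)) : (inner 𝕜 u v : 𝕜) = 0 := by
  fin_cases j
  · exact horth u hu v hv
  · rw [← inner_conj_symm, horth v hv u hu, map_zero]

theorem mem_of_forall_inner_eq_zero
    (horth : ∀ x ∈ V 0, ∀ y ∈ V 1, (inner 𝕜 x y : 𝕜) = 0)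
    (hspan : ∀ x : E, ∃ x₀ ∈ V 0, ∃ x₁ ∈ V 1, x = x₀ + x₁)
    {j : Fin 2} {x : E} (hx : ∀ w ∈ V (j + 1), (inner 𝕜 x w : 𝕜) = 0) : x ∈ V j := by
  obtain ⟨x₀, h₀, x₁, h₁, rfl⟩ := hspan x
  fin_cases j
  · have h := hx x₁ h₁
    rw [inner_add_left, horth x₀ h₀ x₁ h₁, zero_add, inner_self_eq_zero] at h
    simpa [h] using h₀
  · have h := hx x₀ h₀
    rw [inner_add_left, inner_eq_zero_of_mem_of_mem_add_one (j := 1) horth h₁ h₀, add_zero,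
      inner_self_eq_zero] at h
    simpa [h] using h₁

theorem adjoint_mem_of_homogeneous [CompleteSpace E]
    (horth : ∀ x ∈ V 0, ∀ y ∈ V 1, (inner 𝕜 x y : 𝕜) = 0)
    (hspan : ∀ x : E, ∃ x₀ ∈ V 0, ∃ x₁ ∈ V 1, x = x₀ + x₁)
    {T : E →L[𝕜] E} {t : Fin 2} (hT : ∀ i : Fin 2, ∀ x ∈ V i, T x ∈ V (i + t))
    {j : Fin 2} {u : E} (hu : u ∈ V j) : adjoint T u ∈ V (j + t) := by
  refine mem_of_forall_inner_eq_zero horth hspan fun w hw => ?_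
  have hdeg : j + t + 1 + t = j + 1 := by fin_cases j <;> fin_cases t <;> rfl
  have hTw : T w ∈ V (j + 1) := hdeg ▸ hT _ w hw
  rw [adjoint_inner_left]
  exact inner_eq_zero_of_mem_of_mem_add_one horth hu hTw

end Graded

theorem neg_one_pow_superadjoint_sign {R : Type*} [Monoid R] [HasDistribNeg R] (n t i : Fin 2) :
    (-1 : R) ^ (((n : ℕ) + 1) * ((t : ℕ) + (i : ℕ)) + (t : ℕ) * (i : ℕ)) *
        (-1 : R) ^ (((n : ℕ) + 1) * ((i + n + t : Fin 2) : ℕ)) = (-1 : R) ^ ((t : ℕ) * (i : ℕ)) := by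
  fin_cases n <;> fin_cases t <;> fin_cases i <;> simp [pow_succ]

theorem superadjoint_defining_property_general
    (H : Type*) [NormedAddCommGroup H] [InnerProductSpace ℂ H] [CompleteSpace H]
    (Hsub : Fin 2 → Submodule ℂ H)
    (horth : ∀ x ∈ Hsub 0, ∀ y ∈ Hsub 1, (inner ℂ x y : ℂ) = 0)
    (hspan : ∀ x : H, ∃ x₀ ∈ Hsub 0, ∃ x₁ ∈ Hsub 1, x = x₀ + x₁)
    (n : Fin 2) (J : H →L[ℂ] H)
    (hJgrade : ∀ i : Fin 2, ∀ x ∈ Hsub i, J x ∈ Hsub (i + n))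
    (hJsq : ∀ i : Fin 2, ∀ x ∈ Hsub i,
      J (J x) = ((-1 : ℂ)) ^ (((n : ℕ) + 1) * (i : ℕ)) • x)
    (T : H →L[ℂ] H) (t : Fin 2)
    (hT : ∀ i : Fin 2, ∀ x ∈ Hsub i, T x ∈ Hsub (i + t)) :
    ∀ i : Fin 2, ∀ x ∈ Hsub i, ∀ y : H,
      (inner ℂ (J (((-1 : ℂ)) ^ (((n : ℕ) + 1) * ((t : ℕ) + (i : ℕ)) + (t : ℕ) * (i : ℕ)) •
          J ((adjoint T) (J x)))) y : ℂ) =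
        ((-1 : ℂ)) ^ ((t : ℕ) * (i : ℕ)) * (inner ℂ (J x) (T y) : ℂ) := by
  intro i x hx y
  have hTJx : adjoint T (J x) ∈ Hsub (i + n + t) :=
    adjoint_mem_of_homogeneous horth hspan hT (hJgrade i x hx)
  rw [map_smul, inner_smul_left, hJsq _ _ hTJx, inner_smul_left, adjoint_inner_left, ← mul_assoc]
  simp only [map_pow, map_neg, map_one]
  rw [neg_one_pow_superadjoint_sign]

/-- Let `H = H₀ ⊕ H₁` be a complex Hilbert space, orthogonal direct sum of
two closed subspaces, `n ∈ {0,1}`, and `J` a unitary operator with `J(H_i) ⊆ H_{i+n}` and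
`J² = (−1)^{(n+1)i}` on `H_i`. For a bounded operator `T` homogeneous of degree `t`, the
superadjoint `T†x = (−1)^{(n+1)(t+i)+ti} J T* J x` (for `x ∈ H_i`) satisfies
`⟨T†x, y⟩ = (−1)^{ti} ⟨x, Ty⟩` where `⟨x,y⟩ = (Jx,y)`. -/
theorem superadjoint_defining_property
    (H : Type*) [NormedAddCommGroup H] [InnerProductSpace ℂ H] [CompleteSpace H]
    (Hsub : Fin 2 → Submodule ℂ H)
    (hclosed : ∀ i, IsClosed (Hsub i : Set H))
    (horth : ∀ x ∈ Hsub 0, ∀ y ∈ Hsub 1, (inner ℂ x y : ℂ) = 0)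
    (hspan : ∀ x : H, ∃ x₀ ∈ Hsub 0, ∃ x₁ ∈ Hsub 1, x = x₀ + x₁)
    (n : Fin 2) (J : H →L[ℂ] H)
    (hJinner : ∀ x y : H, (inner ℂ (J x) (J y) : ℂ) = inner ℂ x y)
    (hJsurj : Function.Surjective J)
    (hJgrade : ∀ i : Fin 2, ∀ x ∈ Hsub i, J x ∈ Hsub (i + n))
    (hJsq : ∀ i : Fin 2, ∀ x ∈ Hsub i,
      J (J x) = ((-1 : ℂ)) ^ (((n : ℕ) + 1) * (i : ℕ)) • x)
    (T : H →L[ℂ] H) (t : Fin 2)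
    (hT : ∀ i : Fin 2, ∀ x ∈ Hsub i, T x ∈ Hsub (i + t)) :
    ∀ i : Fin 2, ∀ x ∈ Hsub i, ∀ y : H,
      (inner ℂ (J (((-1 : ℂ)) ^ (((n : ℕ) + 1) * ((t : ℕ) + (i : ℕ)) + (t : ℕ) * (i : ℕ)) •
          J ((adjoint T) (J x)))) y : ℂ) =
        ((-1 : ℂ)) ^ ((t : ℕ) * (i : ℕ)) * (inner ℂ (J x) (T y) : ℂ) :=
  superadjoint_defining_property_general H Hsub horth hspan n J hJgrade hJsq T t hT
end

section
/- Let A be a complex Banach space and let ρ be an action of ℝ^N on A by isometric linear bijections, i.e. ρ₀ = id, ρ_{z+z'} = ρ_z ∘ ρ_{z'} and ‖ρ_z(a)‖ = ‖a‖ for all z, z' ∈ ℝ^N and a ∈ A. Suppose a ∈ A is a smooth vector, i.e. the map ρ^a : ℝ^N → A, z ↦ ρ_z(a), is infinitely Fréchet-differentiable. Then for every k ∈ ℕ the k-th derivative of ρ^a satisfies ‖D^k ρ^a(z)‖ = ‖D^k ρ^a(0)‖ for all z ∈ ℝ^N; in particular ρ^a and all of its iterated derivatives are bounded on ℝ^N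 (ρ^a belongs to ℬ_A(ℝ^N)). -/
noncomputable section

lemma iteratedFDeriv_comp_add_aux {E F : Type*} [NormedAddCommGroup E] [NormedSpace ℝ E]
    [NormedAddCommGroup F] [NormedSpace ℝ F] (f : E → F) (hf : ContDiff ℝ (⊤ : ℕ∞) f)
    (c : E) : ∀ (k : ℕ) (x : E),
    iteratedFDeriv ℝ k (fun w => f (w + c)) x = iteratedFDeriv ℝ k f (x + c) := by
  intro k
  induction k with
  | zero => intro x; ext m; simp
  | succ k ih =>
    intro x
    have hdf : DifferentiableAt ℝ (iteratedFDeriv ℝ k f) (x + c) :=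
      (hf.differentiable_iteratedFDeriv (by exact_mod_cast lt_top_iff_ne_top.2 (by simp))
        (x + c))
    have h1 : fderiv ℝ (iteratedFDeriv ℝ k (fun w => f (w + c))) x
        = fderiv ℝ (iteratedFDeriv ℝ k f) (x + c) := by
      have heq : iteratedFDeriv ℝ k (fun w => f (w + c))
          = fun y => iteratedFDeriv ℝ k f (y + c) := funext (ih)
      rw [heq]
      have ht : HasFDerivAt (fun y : E => y + c) (ContinuousLinearMap.id ℝ E) x := by
        simpa using (hasFDerivAt_id x).add_const c
      have := (hdf.hasFDerivAt.comp x ht).fderiv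
      simp only [ContinuousLinearMap.comp_id] at this; exact this
    rw [iteratedFDeriv_succ_eq_comp_left, iteratedFDeriv_succ_eq_comp_left,
      Function.comp_apply, Function.comp_apply, h1]

/-- Let `A` be a complex Banach space with an action `ρ` of `ℝ^N` by
isometric linear bijections (`ρ₀ = id`, `ρ_{z+z'} = ρ_z ∘ ρ_{z'}`, `‖ρ_z a‖ = ‖a‖`). If
`a ∈ A` is a smooth vector, i.e. `ρ^a : z ↦ ρ_z(a)` is smooth, then for every `k` the `k`-th
derivative satisfies `‖D^k ρ^a(z)‖ = ‖D^k ρ^a(0)‖` for all `z`; in particular `ρ^a` and all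
its iterated derivatives are bounded on `ℝ^N`, i.e. `ρ^a ∈ ℬ_A(ℝ^N)`. -/
theorem smooth_vector_derivatives_bounded
    (N : ℕ) (A : Type*) [NormedAddCommGroup A] [NormedSpace ℂ A] [CompleteSpace A]
    (ρ : (Fin N → ℝ) → A → A)
    (hlin : ∀ z, IsLinearMap ℂ (ρ z))
    (hzero : ρ 0 = id)
    (hadd : ∀ z z' : Fin N → ℝ, ρ (z + z') = ρ z ∘ ρ z')
    (hiso : ∀ (z : Fin N → ℝ) (a : A), ‖ρ z a‖ = ‖a‖)
    (a : A) (hsmooth : ContDiff ℝ (⊤ : ℕ∞) fun z => ρ z a) :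
    (∀ (k : ℕ) (z : Fin N → ℝ),
      ‖iteratedFDeriv ℝ k (fun z => ρ z a) z‖ =
        ‖iteratedFDeriv ℝ k (fun z => ρ z a) 0‖) ∧
    (∀ k : ℕ, ∃ C : ℝ, ∀ z : Fin N → ℝ,
      ‖iteratedFDeriv ℝ k (fun z => ρ z a) z‖ ≤ C) := by
  have hinv : ∀ z : Fin N → ℝ, Function.LeftInverse (ρ (-z)) (ρ z) := by
    intro z b
    have : ρ (-z + z) b = ρ (-z) (ρ z b) := by rw [hadd]; rfl
    simpa [hzero] using this.symm
  have hinv' : ∀ z : Fin N → ℝ, Function.RightInverse (ρ (-z)) (ρ z) := by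
    intro z b
    have : ρ (z + -z) b = ρ z (ρ (-z) b) := by rw [hadd]; rfl
    simpa [hzero] using this.symm
  have key : ∀ (k : ℕ) (z : Fin N → ℝ),
      ‖iteratedFDeriv ℝ k (fun z => ρ z a) z‖ =
        ‖iteratedFDeriv ℝ k (fun z => ρ z a) 0‖ := by
    intro k z
    set f : (Fin N → ℝ) → A := fun z => ρ z a with hf
    let e : A ≃ₗᵢ[ℝ] A :=
      { toFun := ρ z
        invFun := ρ (-z)
        left_inv := hinv z
        right_inv := hinv' z
        map_add' := (hlin z).map_add
        map_smul' := by
          intro r b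
          have := (hlin z).map_smul (r : ℂ) b
          simpa using this
        norm_map' := hiso z }
    have hcomp : (⇑e ∘ f) = fun w => f (w + z) := by
      funext w
      simp only [Function.comp_apply, hf]
      have : ρ (w + z) a = ρ z (ρ w a) := by rw [add_comm, hadd]; rfl
      exact (this).symm
    calc ‖iteratedFDeriv ℝ k f z‖
        = ‖iteratedFDeriv ℝ k (fun w => f (w + z)) 0‖ := by
          rw [iteratedFDeriv_comp_add_aux f hsmooth z k 0]; simp
      _ = ‖iteratedFDeriv ℝ k (⇑e ∘ f) 0‖ := by rw [hcomp]
      _ = ‖iteratedFDeriv ℝ k f 0‖ := e.norm_iteratedFDeriv_comp_left f 0 k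
  exact ⟨key, fun k => ⟨‖iteratedFDeriv ℝ k (fun z => ρ z a) 0‖, fun z => le_of_eq (key k z)⟩⟩
end
end
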